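/- arXiv:1209.4597 — 2 statements merged into one kernel-verified Lean document; each statement's English description precedes it below -/
import Mathlib

section
/- Let V be a k-vector space with basis {v_j}_{j≥1} and θ₂ the linear operator defined by: θ₂(v₁) = v₁ − v₃; θ₂(v₂) = v₁ − v₂ − v₃ + v₄ − v₅; θ₂(v₃) = v₁ − v₂ + v₄; θ₂(v_{4k}) = v_{4k+2} for k ≥ 1; θ₂(v_{4k+1}) = −v₁ + v₂ + Σ_{j=2}^{(4k+2)/2} (−1)^{j−1} v_{2j} for k ≥ 1; θ₂(v_{4k+2}) = 0 for k ≥ 1; θ₂(v_{4k+3}) = v₁ − v₂ + [Σ_{j=2}^{(4k+4)/2} (−1)^{j} v_{2j}] − v_{4k+5} for k ≥ 1. Then θ₂ is nilpotent: θ₂⁶ = 0. -/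
/-- The standard basis `v j = single j 1` of the space with countable basis `{v_j}_{j ≥ 1}`. -/
noncomputable def v (k : Type*) [Field k] (j : ℕ+) : ℕ+ →₀ k := Finsupp.single j 1

/-!
Write `E` for the span of the `v (2 * j)` with `j ≥ 2`. Since `θ₂` sends `v (4 * m)` to
`v (4 * m + 2)` and kills `v (4 * m + 2)`, `θ₂ ^ 2` kills `E`. Modulo `E` the images of the basis
vectors only involve `v 1 - v 2`, `v 3`, `v 5` and a single `v (4 * m + 5)`: the orbits
`v 1 - v 2 ↦ v 2 - v 4 + v 5 ↦ -(v 3 + v 5) ↦ -v 6 ↦ 0` and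
`v 1 ↦ v 1 - v 3 ↦ v 2 - v 3 - v 4 ↦ -(v 3 + v 5) - v 6 ↦ -v 6 ↦ 0` give
`v 1 - v 2 ∈ ker θ₂ ^ 4` and `v 1 ∈ ker θ₂ ^ 5`. Hence `θ₂ ^ 5` kills every `v (4 * m + 1)`, and
`θ₂ ^ 6` kills every `v (4 * m + 3)`, whose image is `v 1 - v 2` plus an element of `E` minus
`v (4 * (m + 1) + 1)`.
-/

theorem Module.End.mem_ker_pow_succ_iff {R M : Type*} [Semiring R] [AddCommMonoid M]
    [Module R M] {f : Module.End R M} {n : ℕ} {x : M} :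
    x ∈ LinearMap.ker (f ^ (n + 1)) ↔ f x ∈ LinearMap.ker (f ^ n) := by
  simp only [LinearMap.mem_ker, pow_succ, Module.End.mul_apply]

theorem Module.End.ker_pow_mono {R M : Type*} [Semiring R] [AddCommMonoid M] [Module R M]
    (f : Module.End R M) {m n : ℕ} (h : m ≤ n) :
    LinearMap.ker (f ^ m) ≤ LinearMap.ker (f ^ n) :=
  (LinearMap.iterateKer f).monotone h

theorem PNat.cases_mod_four (a : ℕ+) : a = 1 ∨ a = 2 ∨ a = 3 ∨
    ∃ m : ℕ+, a = 4 * m ∨ a = 4 * m + 1 ∨ a = 4 * m + 2 ∨ a = 4 * m + 3 := by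
  rcases lt_or_ge (a : ℕ) 4 with h | h
  · have := a.pos
    simp only [← PNat.coe_inj, PNat.val_ofNat]
    omega
  · obtain ⟨m, hm⟩ : ∃ m : ℕ+, (m : ℕ) = a / 4 := ⟨⟨a / 4, by omega⟩, rfl⟩
    refine Or.inr <| Or.inr <| Or.inr ⟨m, ?_⟩
    simp only [← PNat.coe_inj]
    push_cast
    omega

theorem PNat.two_mul_cases {j : ℕ+} (hj : 2 ≤ j) :
    ∃ m : ℕ+, 2 * j = 4 * m ∨ 2 * j = 4 * m + 2 := by
  have : 2 ≤ (j : ℕ) := hj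
  obtain ⟨m, hm⟩ : ∃ m : ℕ+, (m : ℕ) = j / 2 := ⟨⟨j / 2, by omega⟩, rfl⟩
  refine ⟨m, ?_⟩
  simp only [← PNat.coe_inj]
  push_cast
  omega

open LinearMap (ker)
open Module.End (mem_ker_pow_succ_iff ker_pow_mono)

section

variable {k : Type*} [Field k] {θ : Module.End k (ℕ+ →₀ k)}

theorem v_two_mul_mem_ker_sq (h4k : ∀ m : ℕ+, θ (v k (4 * m)) = v k (4 * m + 2))
    (h4k2 : ∀ m : ℕ+, θ (v k (4 * m + 2)) = 0) {j : ℕ+} (hj : 2 ≤ j) :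
    v k (2 * j) ∈ ker (θ ^ 2) := by
  obtain ⟨m, hm | hm⟩ := PNat.two_mul_cases hj <;>
    simp only [hm, mem_ker_pow_succ_iff, h4k, h4k2, Submodule.zero_mem]

theorem sum_smul_v_two_mul_mem_ker_sq (h4k : ∀ m : ℕ+, θ (v k (4 * m)) = v k (4 * m + 2))
    (h4k2 : ∀ m : ℕ+, θ (v k (4 * m + 2)) = 0) (b : ℕ+) (c : ℕ+ → k) :
    ∑ j ∈ Finset.Icc 2 b, c j • v k (2 * j) ∈ ker (θ ^ 2) :=
  Submodule.sum_mem _ fun _ hj =>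
    Submodule.smul_mem _ _ (v_two_mul_mem_ker_sq h4k h4k2 (Finset.mem_Icc.1 hj).1)

theorem apply_v_five (h4k1 : ∀ m : ℕ+, θ (v k (4 * m + 1)) =
      -v k 1 + v k 2 + ∑ j ∈ Finset.Icc (2 : ℕ+) (2 * m + 1),
        ((-1 : k) ^ ((j : ℕ) - 1)) • v k (2 * j)) :
    θ (v k 5) = -v k 1 + v k 2 - v k 4 + v k 6 := by
  rw [show (5 : ℕ+) = 4 * 1 + 1 from rfl, h4k1,
    show Finset.Icc (2 : ℕ+) (2 * 1 + 1) = {2, 3} by decide, Finset.sum_pair (by decide)]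
  norm_num [sub_eq_add_neg, add_assoc, show (2 * 2 : ℕ+) = 4 from rfl,
    show (2 * 3 : ℕ+) = 6 from rfl]

theorem apply_v_three_add_v_five (h3 : θ (v k 3) = v k 1 - v k 2 + v k 4)
    (h5 : θ (v k 5) = -v k 1 + v k 2 - v k 4 + v k 6) :
    θ (v k 3 + v k 5) = v k 6 := by
  rw [map_add, h3, h5]
  abel

theorem v_one_sub_v_two_mem_ker_pow_four (h1 : θ (v k 1) = v k 1 - v k 3)
    (h2 : θ (v k 2) = v k 1 - v k 2 - v k 3 + v k 4 - v k 5)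
    (h3 : θ (v k 3) = v k 1 - v k 2 + v k 4) (h4 : θ (v k 4) = v k 6)
    (h5 : θ (v k 5) = -v k 1 + v k 2 - v k 4 + v k 6) (h6 : θ (v k 6) = 0) :
    v k 1 - v k 2 ∈ ker (θ ^ 4) := by
  have e1 : θ (v k 1 - v k 2) = v k 2 - v k 4 + v k 5 := by
    rw [map_sub, h1, h2]
    abel
  have e2 : θ (v k 2 - v k 4 + v k 5) = -(v k 3 + v k 5) := by
    rw [map_add, map_sub, h2, h4, h5]
    abel
  simp only [mem_ker_pow_succ_iff, e1, e2, map_neg, apply_v_three_add_v_five h3 h5, h6,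
    neg_zero, Submodule.zero_mem]

theorem v_one_mem_ker_pow_five (h1 : θ (v k 1) = v k 1 - v k 3)
    (h2 : θ (v k 2) = v k 1 - v k 2 - v k 3 + v k 4 - v k 5)
    (h3 : θ (v k 3) = v k 1 - v k 2 + v k 4) (h4 : θ (v k 4) = v k 6)
    (h5 : θ (v k 5) = -v k 1 + v k 2 - v k 4 + v k 6) (h6 : θ (v k 6) = 0) :
    v k 1 ∈ ker (θ ^ 5) := by
  have e1 : θ (v k 1 - v k 3) = v k 2 - v k 3 - v k 4 := by
    rw [map_sub, h1, h3]
    abel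
  have e2 : θ (v k 2 - v k 3 - v k 4) = -(v k 3 + v k 5) - v k 6 := by
    rw [map_sub, map_sub, h2, h3, h4]
    abel
  simp only [mem_ker_pow_succ_iff, h1, e1, e2, map_sub, map_neg, apply_v_three_add_v_five h3 h5,
    h6, sub_zero, neg_zero, Submodule.zero_mem]

theorem v_four_mul_add_one_mem_ker_pow_five
    (h4k : ∀ m : ℕ+, θ (v k (4 * m)) = v k (4 * m + 2))
    (h4k1 : ∀ m : ℕ+, θ (v k (4 * m + 1)) =
      -v k 1 + v k 2 + ∑ j ∈ Finset.Icc (2 : ℕ+) (2 * m + 1),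
        ((-1 : k) ^ ((j : ℕ) - 1)) • v k (2 * j))
    (h4k2 : ∀ m : ℕ+, θ (v k (4 * m + 2)) = 0) (h12 : v k 1 - v k 2 ∈ ker (θ ^ 4)) (m : ℕ+) :
    v k (4 * m + 1) ∈ ker (θ ^ 5) := by
  rw [mem_ker_pow_succ_iff, h4k1, neg_add_eq_sub, ← neg_sub]
  exact add_mem (neg_mem h12)
    (ker_pow_mono θ (by norm_num) (sum_smul_v_two_mul_mem_ker_sq h4k h4k2 _ _))

theorem v_four_mul_add_three_mem_ker_pow_six
    (h4k : ∀ m : ℕ+, θ (v k (4 * m)) = v k (4 * m + 2))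
    (h4k1 : ∀ m : ℕ+, θ (v k (4 * m + 1)) =
      -v k 1 + v k 2 + ∑ j ∈ Finset.Icc (2 : ℕ+) (2 * m + 1),
        ((-1 : k) ^ ((j : ℕ) - 1)) • v k (2 * j))
    (h4k2 : ∀ m : ℕ+, θ (v k (4 * m + 2)) = 0)
    (h4k3 : ∀ m : ℕ+, θ (v k (4 * m + 3)) =
      v k 1 - v k 2 + (∑ j ∈ Finset.Icc (2 : ℕ+) (2 * m + 2),
        ((-1 : k) ^ (j : ℕ)) • v k (2 * j)) - v k (4 * m + 5))
    (h12 : v k 1 - v k 2 ∈ ker (θ ^ 4)) (m : ℕ+) :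
    v k (4 * m + 3) ∈ ker (θ ^ 6) := by
  rw [mem_ker_pow_succ_iff, h4k3,
    show 4 * m + 5 = 4 * (m + 1) + 1 from PNat.eq (by push_cast; ring)]
  exact sub_mem
    (add_mem (ker_pow_mono θ (by norm_num) h12)
      (ker_pow_mono θ (by norm_num) (sum_smul_v_two_mul_mem_ker_sq h4k h4k2 _ _)))
    (v_four_mul_add_one_mem_ker_pow_five h4k h4k1 h4k2 h12 _)

end

theorem theta2_nilpotent_of_order_six {k : Type*} [Field k]
    (θ₂ : (ℕ+ →₀ k) →ₗ[k] (ℕ+ →₀ k))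
    (h1 : θ₂ (v k 1) = v k 1 - v k 3)
    (h2 : θ₂ (v k 2) = v k 1 - v k 2 - v k 3 + v k 4 - v k 5)
    (h3 : θ₂ (v k 3) = v k 1 - v k 2 + v k 4)
    (h4k : ∀ m : ℕ+, θ₂ (v k (4 * m)) = v k (4 * m + 2))
    (h4k1 : ∀ m : ℕ+, θ₂ (v k (4 * m + 1)) =
      -v k 1 + v k 2 + ∑ j ∈ Finset.Icc (2 : ℕ+) (2 * m + 1),
        ((-1 : k) ^ ((j : ℕ) - 1)) • v k (2 * j))
    (h4k2 : ∀ m : ℕ+, θ₂ (v k (4 * m + 2)) = 0)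
    (h4k3 : ∀ m : ℕ+, θ₂ (v k (4 * m + 3)) =
      v k 1 - v k 2 + (∑ j ∈ Finset.Icc (2 : ℕ+) (2 * m + 2),
        ((-1 : k) ^ (j : ℕ)) • v k (2 * j)) - v k (4 * m + 5)) :
    θ₂ ^ 6 = 0 := by
  have h4 : θ₂ (v k 4) = v k 6 := h4k 1
  have h6 : θ₂ (v k 6) = 0 := h4k2 1
  have h5 := apply_v_five h4k1
  have h12 := v_one_sub_v_two_mem_ker_pow_four h1 h2 h3 h4 h5 h6
  have hv1 := v_one_mem_ker_pow_five h1 h2 h3 h4 h5 h6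
  refine Finsupp.basisSingleOne.ext fun a => ?_
  show v k a ∈ ker (θ₂ ^ 6)
  rcases PNat.cases_mod_four a with rfl | rfl | rfl | ⟨m, rfl | rfl | rfl | rfl⟩
  · exact ker_pow_mono θ₂ (by norm_num) hv1
  · rw [show v k 2 = v k 1 - (v k 1 - v k 2) by abel]
    exact ker_pow_mono θ₂ (by norm_num) (sub_mem hv1 (ker_pow_mono θ₂ (by norm_num) h12))
  · rw [mem_ker_pow_succ_iff, h3]
    exact add_mem (ker_pow_mono θ₂ (by norm_num) h12)
      (ker_pow_mono θ₂ (by norm_num) (v_two_mul_mem_ker_sq h4k h4k2 (le_refl 2)))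
  · rw [mem_ker_pow_succ_iff, h4k]
    exact ker_pow_mono θ₂ (show 1 ≤ 5 by norm_num) (h4k2 m)
  · exact ker_pow_mono θ₂ (by norm_num) (v_four_mul_add_one_mem_ker_pow_five h4k h4k1 h4k2 h12 m)
  · exact ker_pow_mono θ₂ (show 1 ≤ 6 by norm_num) (h4k2 m)
  · exact v_four_mul_add_three_mem_ker_pow_six h4k h4k1 h4k2 h4k3 h12 m
end

section
/- Let V be a k-vector space with basis {v_j}_{j≥1}. Define θ₁ on this basis by: θ₁(v₁) = v₁ − v₂ + v₃; θ₁(v₂) = v₃ − v₄ + v₅; θ₁(v₃) = −v₁ + v₂ − v₄ + v₅; θ₁(v_{2k}) = v_{2k+1} − v_{2k+2} + v_{2k+3} for k ≥ 2; θ₁(v_{2k+1}) = (−1)^k v₁ + (−1)^{k+1} v₂ + Σ_{j=2}^{k} (−1)^{j+k} v_{2j} − v_{2k+2} + v_{2k+3} for k ≥ 2. Then θ₁² = 0, so θ₁ is nilpotent of order 2. -/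
open Finset

lemma PNat.eq_one_or_eq_two_mul_or_eq_two_mul_add_one (j : ℕ+) :
    j = 1 ∨ ∃ m : ℕ+, j = 2 * m ∨ j = 2 * m + 1 := by
  induction j using PNat.recOn with
  | one => exact .inl rfl
  | succ j ih =>
    right
    obtain rfl | ⟨m, rfl | rfl⟩ := ih
    · exact ⟨1, .inl rfl⟩
    · exact ⟨m, .inr rfl⟩
    · exact ⟨m + 1, .inl (by rw [mul_add, add_assoc]; rfl)⟩

theorem AddMonoidHom.apply_apply_eq_zero_of_recurrence {M : Type*} [AddCommGroup M]
    (f : M →+ M) (a : ℕ+ → M)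
    (hone : f (a 1) = a 1 - a 2 + a 3)
    (htwo_mul : ∀ m : ℕ+, f (a (2 * m)) = a (2 * m + 1) - a (2 * m + 2) + a (2 * m + 3))
    (hthree : f (a 3) = -f (a 1) + f (a 2))
    (hrec : ∀ m : ℕ+, f (a (2 * m + 3)) = -f (a (2 * m + 1)) + f (a (2 * m + 2)))
    (j : ℕ+) : f (f (a j)) = 0 := by
  have hsq_one : f (f (a 1)) = 0 := by
    rw [hone, map_add, map_sub, hthree]
    abel
  have hsq_two_mul (m : ℕ+) : f (f (a (2 * m))) = 0 := by
    rw [htwo_mul, map_add, map_sub, hrec]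
    abel
  have hsq_two_mul_add_one (m : ℕ+) : f (f (a (2 * m + 1))) = 0 := by
    induction m using PNat.recOn with
    | one =>
      rw [show (2 * 1 + 1 : ℕ+) = 3 from rfl, hthree, map_add, map_neg, hsq_one]
      simpa using hsq_two_mul 1
    | succ m ih =>
      rw [show 2 * (m + 1) + 1 = 2 * m + 3 by rw [mul_add, add_assoc]; rfl, hrec, map_add, map_neg,
        ih, show 2 * m + 2 = 2 * (m + 1) by rw [mul_add]; rfl, hsq_two_mul]
      simp
  obtain rfl | ⟨m, rfl | rfl⟩ := j.eq_one_or_eq_two_mul_or_eq_two_mul_add_one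
  exacts [hsq_one, hsq_two_mul m, hsq_two_mul_add_one m]

lemma sum_Icc_add_one_neg_one_pow_smul {R M : Type*} [Ring R] [AddCommGroup M] [Module R M]
    (b : ℕ+ → M) (m : ℕ+) :
    ∑ j ∈ Icc (2 : ℕ+) (m + 1), (-1 : R) ^ ((j : ℕ) + ((m + 1 : ℕ+) : ℕ)) • b j =
      -∑ j ∈ Icc (2 : ℕ+) m, (-1 : R) ^ ((j : ℕ) + (m : ℕ)) • b j + b (m + 1) := by
  rw [← insert_Icc_right_eq_Icc_add_one (a := 2) (add_le_add_left (one_le : 1 ≤ m) 1),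
    sum_insert (by simp), add_comm, ← sum_neg_distrib]
  simp [← add_assoc, pow_succ]

section OddImage

variable {R M : Type*} [CommRing R] [AddCommGroup M] [Module R M]

variable (R) in
/-- The paper's value of `θ₁ v_{2m+1}` for `m ≥ 2`; at `m = 1` it is the given `θ₁ v₃`. -/
def oddImage (b : ℕ+ → M) (m : ℕ+) : M :=
  (-1 : R) ^ (m : ℕ) • b 1 + (-1 : R) ^ ((m : ℕ) + 1) • b 2 +
    (∑ j ∈ Icc (2 : ℕ+) m, (-1 : R) ^ ((j : ℕ) + (m : ℕ)) • b (2 * j)) - b (2 * m + 2) +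
    b (2 * m + 3)

lemma oddImage_one (b : ℕ+ → M) : oddImage R b 1 = -b 1 + b 2 - b 4 + b 5 := by
  simp only [oddImage, PNat.val_ofNat, pow_one, neg_smul, one_smul, Nat.reduceAdd, even_two,
    Even.neg_pow, one_pow, PNat.ofNat_lt_ofNat, Order.lt_two_iff, le_refl, Icc_eq_empty_of_lt,
    sum_empty, add_zero, mul_one]
  rfl

lemma oddImage_add_one (b : ℕ+ → M) (m : ℕ+) :
    oddImage R b (m + 1) = -oddImage R b m + (b (2 * m + 3) - b (2 * m + 4) + b (2 * m + 5)) := by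
  simp only [oddImage]
  rw [sum_Icc_add_one_neg_one_pow_smul (fun j => b (2 * j))]
  simp only [PNat.add_coe, PNat.one_coe, pow_succ, mul_add, mul_one, add_assoc]
  rw [show (2 + 2 : ℕ+) = 4 from rfl, show (2 + 3 : ℕ+) = 5 from rfl]
  module

end OddImage

theorem theta1_in_v_basis_nilpotent_of_order_two {k : Type*} [Field k]
    (θ₁ : (ℕ+ →₀ k) →ₗ[k] (ℕ+ →₀ k))
    (h1 : θ₁ (v k 1) = v k 1 - v k 2 + v k 3)
    (h2 : θ₁ (v k 2) = v k 3 - v k 4 + v k 5)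
    (h3 : θ₁ (v k 3) = -v k 1 + v k 2 - v k 4 + v k 5)
    (heven : ∀ m : ℕ+, 2 ≤ m →
      θ₁ (v k (2 * m)) = v k (2 * m + 1) - v k (2 * m + 2) + v k (2 * m + 3))
    (hodd : ∀ m : ℕ+, 2 ≤ m →
      θ₁ (v k (2 * m + 1)) =
        ((-1 : k) ^ (m : ℕ)) • v k 1 + ((-1 : k) ^ ((m : ℕ) + 1)) • v k 2 +
        (∑ j ∈ Finset.Icc (2 : ℕ+) m, ((-1 : k) ^ ((j : ℕ) + (m : ℕ))) • v k (2 * j)) -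
        v k (2 * m + 2) + v k (2 * m + 3)) :
    θ₁ ^ 2 = 0 := by
  have htwo_mul (m : ℕ+) :
      θ₁ (v k (2 * m)) = v k (2 * m + 1) - v k (2 * m + 2) + v k (2 * m + 3) := by
    obtain rfl | hm := (one_le : 1 ≤ m).eq_or_lt
    exacts [h2, heven m hm]
  have htwo_mul_add_one (m : ℕ+) : θ₁ (v k (2 * m + 1)) = oddImage k (v k) m := by
    obtain rfl | hm := (one_le : 1 ≤ m).eq_or_lt
    exacts [h3.trans (oddImage_one _).symm, hodd m hm]
  have hthree : θ₁ (v k 3) = -θ₁ (v k 1) + θ₁ (v k 2) := by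
    rw [h1, h2, h3]
    abel
  have hrec (m : ℕ+) :
      θ₁ (v k (2 * m + 3)) = -θ₁ (v k (2 * m + 1)) + θ₁ (v k (2 * m + 2)) := by
    rw [show 2 * m + 3 = 2 * (m + 1) + 1 by rw [mul_add, add_assoc]; rfl, htwo_mul_add_one, oddImage_add_one,
      htwo_mul_add_one, show 2 * m + 2 = 2 * (m + 1) by rw [mul_add]; rfl, htwo_mul]
    rfl
  refine Finsupp.basisSingleOne.ext fun j => ?_
  simpa [pow_two, v] using
    θ₁.toAddMonoidHom.apply_apply_eq_zero_of_recurrence (v k) h1 htwo_mul hthree hrec j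
end
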